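/- arXiv:2103.05052 — 2 statements merged into one kernel-verified Lean document; each statement's English description precedes it below -/
import Mathlib

section
/- Let (M, φ, ξ, η, g) be a (2n+1)-dimensional K-contact pseudo-metric manifold (so ξ is Killing, Qξ = 2nεξ and ∇_X ξ = -εφX, where ε = g(ξ,ξ) = ±1 and Q is the Ricci operator). Then for every vector field X, (∇_X Q)ξ = -2n φX + ε QφX. -/
open scoped BigOperators

/-- Abstract model of a `(2n+1)`-dimensional contact pseudo-metric manifold
`(M, φ, ξ, η, g)`.  Here `C` plays the role of the commutative ring of smooth
functions on `M` and `V` that of the `C`-module of smooth vector fields;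
`d X f` is the derivative of the function `f` along the vector field `X`,
`bracket` is the Lie bracket, `nabla` is the Levi-Civita connection of the
pseudo-Riemannian metric `g` (characterized by metric compatibility and
torsion-freeness), and `e` is a global pseudo-orthonormal frame with signs
`sgn` which is used to compute traces.  `ε = g(ξ,ξ) = ±1`, `η(ξ) = 1`,
`φ² = -Id + η ⊗ ξ`, `g(φX,φY) = g(X,Y) - ε η(X) η(Y)`, `η(X) = ε g(ξ,X)`,
and the contact condition `g(X, φY) = dη(X,Y)` holds; moreover
`∇_X ξ = -ε φX - φ h X` with `h = ½ £_ξ φ`. -/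
structure ContactSetup (C : Type) [CommRing C] [Algebra ℝ C]
    (V : Type) [AddCommGroup V] [Module ℝ V] [Module C V] [IsScalarTower ℝ C V]
    (n : ℕ) : Type where
  g : V →ₗ[C] V →ₗ[C] C
  g_symm : ∀ X Y, g X Y = g Y X
  g_nondeg : ∀ X, (∀ Y, g X Y = 0) → X = 0
  bracket : V → V → V
  d : V → C → C
  d_addX : ∀ (f : C) (X Y : V), d (X + Y) f = d X f + d Y f
  d_smulX : ∀ (c f : C) (X : V), d (c • X) f = c * d X f
  d_add : ∀ (X : V) (f₁ f₂ : C), d X (f₁ + f₂) = d X f₁ + d X f₂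
  d_mul : ∀ (X : V) (f₁ f₂ : C), d X (f₁ * f₂) = d X f₁ * f₂ + f₁ * d X f₂
  d_const : ∀ (X : V) (c : ℝ), d X (algebraMap ℝ C c) = 0
  bracket_apply : ∀ (X Y : V) (f : C), d (bracket X Y) f = d X (d Y f) - d Y (d X f)
  nabla : V → V → V
  nabla_addX : ∀ X Y Z, nabla (X + Y) Z = nabla X Z + nabla Y Z
  nabla_smulX : ∀ (f : C) (X Y : V), nabla (f • X) Y = f • nabla X Y
  nabla_addY : ∀ X Y Z, nabla X (Y + Z) = nabla X Y + nabla X Z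
  nabla_leibniz : ∀ (f : C) (X Y : V), nabla X (f • Y) = d X f • Y + f • nabla X Y
  nabla_metric : ∀ X Y Z, d X (g Y Z) = g (nabla X Y) Z + g Y (nabla X Z)
  nabla_torsion_free : ∀ X Y, nabla X Y - nabla Y X = bracket X Y
  e : Fin (2 * n + 1) → V
  sgn : Fin (2 * n + 1) → ℝ
  sgn_sq : ∀ i, sgn i * sgn i = 1
  e_orthonormal : ∀ i j, g (e i) (e j) = if i = j then algebraMap ℝ C (sgn i) else 0
  e_complete : ∀ X : V, X = ∑ i, (sgn i • g X (e i)) • e i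
  φ : V →ₗ[C] V
  ξ : V
  η : V →ₗ[C] C
  ε : ℝ
  ε_pm : ε = 1 ∨ ε = -1
  η_ξ : η ξ = 1
  φ_sq : ∀ X, φ (φ X) = -X + η X • ξ
  g_compat : ∀ X Y, g (φ X) (φ Y) = g X Y - ε • (η X * η Y)
  η_g : ∀ X, η X = ε • g ξ X
  contact : ∀ X Y, g X (φ Y)
      = (1/2 : ℝ) • (d X (η Y) - d Y (η X) - η (bracket X Y))
  nabla_xi : ∀ X, nabla X ξ
      = -(ε • φ X) - (1/2 : ℝ) • (φ (bracket ξ (φ X)) - φ (φ (bracket ξ X)))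

noncomputable section

namespace ContactSetup

variable {C : Type} [CommRing C] [Algebra ℝ C]
  {V : Type} [AddCommGroup V] [Module ℝ V] [Module C V] [IsScalarTower ℝ C V]
  {n : ℕ} (S : ContactSetup C V n)

/-- Curvature tensor `R(X,Y)Z = ∇_X ∇_Y Z - ∇_Y ∇_X Z - ∇_[X,Y] Z`. -/
def R (X Y Z : V) : V :=
  S.nabla X (S.nabla Y Z) - S.nabla Y (S.nabla X Z) - S.nabla (S.bracket X Y) Z

/-- Ricci tensor, `Ric(X,Y) = tr (Z ↦ R(Z,X)Y)`. -/
def Ric (X Y : V) : C := ∑ i, S.sgn i • S.g (S.R (S.e i) X Y) (S.e i)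

/-- Ricci operator `Q`, satisfying `g(QX,Y) = Ric(X,Y)`. -/
def Q (X : V) : V := ∑ i, (S.sgn i • S.Ric X (S.e i)) • S.e i

/-- scalar curvature `r = tr Q`. -/
def scal : C := ∑ i, S.sgn i • S.Ric (S.e i) (S.e i)

/-- Lie derivative of the metric, `(£_W g)(X,Y)`. -/
def lieG (W X Y : V) : C :=
  S.d W (S.g X Y) - S.g (S.bracket W X) Y - S.g X (S.bracket W Y)

/-- covariant derivative of the Ricci operator, `(∇_X Q) Y`. -/
def nablaQ (X Y : V) : V := S.nabla X (S.Q Y) - S.Q (S.nabla X Y)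

/-- Lie derivative of the connection, `(£_W ∇)(X,Y)`. -/
def lieNabla (W X Y : V) : V :=
  S.bracket W (S.nabla X Y) - S.nabla (S.bracket W X) Y - S.nabla X (S.bracket W Y)

/-- Lie derivative of the curvature tensor, `(£_W R)(X,Y)Z`. -/
def lieR (W X Y Z : V) : V :=
  S.bracket W (S.R X Y Z) - S.R (S.bracket W X) Y Z - S.R X (S.bracket W Y) Z
    - S.R X Y (S.bracket W Z)

/-- the tensor `h = ½ £_ξ φ`. -/
def hTen (X : V) : V := (1/2 : ℝ) • (S.bracket S.ξ (S.φ X) - S.φ (S.bracket S.ξ X))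

/-- covariant derivative of `φ`, `(∇_X φ) Y`. -/
def nablaPhi (X Y : V) : V := S.nabla X (S.φ Y) - S.φ (S.nabla X Y)

/-- Lie derivative of `φ`, `(£_W φ) X`. -/
def liePhi (W X : V) : V := S.bracket W (S.φ X) - S.φ (S.bracket W X)

/-- K-contact: `ξ` is Killing; hence `Qξ = 2nεξ` and `∇_X ξ = -ε φ X`. -/
def IsKContact : Prop :=
  (∀ X Y, S.lieG S.ξ X Y = 0) ∧ S.Q S.ξ = ((2 * n : ℝ) * S.ε) • S.ξ ∧
    ∀ X, S.nabla X S.ξ = -(S.ε • S.φ X)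

/-- Sasakian: K-contact with `(∇_X φ)Y = g(X,Y)ξ - ε η(Y) X` and
`R(X,Y)ξ = η(Y)X - η(X)Y`. -/
def IsSasakian : Prop :=
  S.IsKContact ∧ (∀ X Y, S.nablaPhi X Y = S.g X Y • S.ξ - (S.ε • S.η Y) • X) ∧
    ∀ X Y, S.R X Y S.ξ = S.η Y • X - S.η X • Y

/-- η-Ricci soliton: `£_W g + 2 Ric + 2 λ g + 2 μ η ⊗ η = 0`. -/
def IsEtaRicciSoliton (W : V) (lam mu : ℝ) : Prop :=
  ∀ X Y, S.lieG W X Y + 2 * S.Ric X Y + (2 * lam) • S.g X Y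
      + (2 * mu) • (S.η X * S.η Y) = 0

end ContactSetup

end

section helpers

variable {C : Type} [CommRing C] [Algebra ℝ C]
  {V : Type} [AddCommGroup V] [Module ℝ V] [Module C V] [IsScalarTower ℝ C V]
  {n : ℕ} (S : ContactSetup C V n)

lemma nabla_realX (r : ℝ) (X Y : V) : S.nabla (r • X) Y = r • S.nabla X Y := by
  rw [← algebraMap_smul C r X, S.nabla_smulX, algebraMap_smul]

lemma nabla_realY (r : ℝ) (X Y : V) : S.nabla X (r • Y) = r • S.nabla X Y := by
  rw [← algebraMap_smul C r Y, S.nabla_leibniz, S.d_const, zero_smul, zero_add,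
    algebraMap_smul]

lemma bracket_realY (r : ℝ) (X Y : V) :
    S.bracket X (r • Y) = r • S.bracket X Y := by
  rw [← S.nabla_torsion_free, ← S.nabla_torsion_free, nabla_realY, nabla_realX,
    smul_sub]

lemma R_realMid (r : ℝ) (Z X Y : V) : S.R Z (r • X) Y = r • S.R Z X Y := by
  unfold ContactSetup.R
  rw [nabla_realX, nabla_realY, bracket_realY, nabla_realX, nabla_realX, smul_sub, smul_sub]

lemma g_realX (r : ℝ) (X Y : V) : S.g (r • X) Y = r • S.g X Y := by
  rw [← algebraMap_smul C r X, map_smul, LinearMap.smul_apply, algebraMap_smul]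

lemma Ric_realX (r : ℝ) (X Y : V) : S.Ric (r • X) Y = r • S.Ric X Y := by
  unfold ContactSetup.Ric
  rw [Finset.smul_sum]
  refine Finset.sum_congr rfl fun i _ => ?_
  rw [R_realMid, g_realX, smul_comm]

lemma Q_real (r : ℝ) (X : V) : S.Q (r • X) = r • S.Q X := by
  unfold ContactSetup.Q
  rw [Finset.smul_sum]
  refine Finset.sum_congr rfl fun i _ => ?_
  rw [Ric_realX, smul_comm (S.sgn i) r, smul_assoc]

end helpers

/-- in a `(2n+1)`-dimensional K-contact pseudo-metric manifold,
`(∇_X Q)ξ = -2n φX + ε QφX` for every vector field `X`. -/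
theorem stmt0
    {C : Type} [CommRing C] [Algebra ℝ C]
    {V : Type} [AddCommGroup V] [Module ℝ V] [Module C V] [IsScalarTower ℝ C V]
    {n : ℕ} (S : ContactSetup C V n)
    (hK : S.IsKContact) (X : V) :
    S.nablaQ X S.ξ = -((2 * n : ℝ) • S.φ X) + S.ε • S.Q (S.φ X) := by
  obtain ⟨-, hQξ, hξ⟩ := hK
  have hε : S.ε * S.ε = 1 := by rcases S.ε_pm with h | h <;> rw [h] <;> norm_num
  have h1 : (2 * (n:ℝ) * S.ε) * (-S.ε) = -(2 * n) := by
    rw [mul_neg, mul_assoc, hε, mul_one]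
  rw [ContactSetup.nablaQ, hQξ, hξ, nabla_realY, hξ, ← neg_smul S.ε (S.φ X),
    Q_real, smul_smul, h1, neg_smul (2 * (n:ℝ)), neg_smul S.ε, sub_neg_eq_add]
end

section
/- Let (M, φ, ξ, η, g) be a (2n+1)-dimensional contact pseudo-metric manifold admitting an η-Ricci soliton (g, V, λ, μ) whose Ricci tensor satisfies Ric = a g + b η⊗η with a, b real constants. Then Ric^{ij}Ric_{ij} + λ r + μ(εa + b) = 0, where r is the scalar curvature and ε = g(ξ,ξ). -/
open scoped BigOperators

/-!
Write `h = £_W g`. The soliton equation and `Ric = a g + b η ⊗ η` give `h = c g + m η ⊗ η` with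
constants `c = -2(a + λ)`, `m = -2(b + μ)`; hence `div W = tr h / 2` and `g(ξ, ∇_ξ W) = h(ξ, ξ) / 2`
are constants, and once `|Ric|²` and `r` are computed the claim reduces to
`Ric^{ij} ∇_i W_j = a div W + b g(ξ, ∇_ξ W) = 0`.

That contraction is the curvature term of the first variation of the scalar curvature along `W`.
A Koszul-type formula expresses `∇²W` through `∇h` and `R(·,·)W`; differentiating it once more and
taking a double trace in which the Ricci identity cancels the third derivatives of `W` leaves
`4 Ric^{ij} ∇_i W_j` equal to a double trace of `∇∇h`. As `∇h = m (∇η ⊗ η + η ⊗ ∇η)`, that trace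
vanishes on a contact pseudo-metric manifold, where `∇_ξ ξ = 0` and `div ξ = 0`.
-/

noncomputable section

lemma eq_zero_of_add_self_eq_zero {M : Type*} [AddCommGroup M] [Module ℝ M] {x : M}
    (h : x + x = 0) : x = 0 := by
  rw [← two_smul ℝ] at h
  exact (smul_eq_zero.mp h).resolve_left two_ne_zero

lemma eq_algebraMap_half_of_add_self_eq {A : Type*} [Ring A] [Algebra ℝ A] {x : A} {r : ℝ}
    (h : x + x = algebraMap ℝ A r) : x = algebraMap ℝ A (r / 2) := by
  have hr : algebraMap ℝ A (r / 2) + algebraMap ℝ A (r / 2) = algebraMap ℝ A r := by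
    rw [← map_add, add_halves]
  rw [← sub_eq_zero]
  exact eq_zero_of_add_self_eq_zero (by rw [sub_add_sub_comm, h, hr, sub_self])

namespace ContactSetup

variable {C : Type} [CommRing C] [Algebra ℝ C]
  {V : Type} [AddCommGroup V] [Module ℝ V] [Module C V] [IsScalarTower ℝ C V]
  {n : ℕ} (S : ContactSetup C V n)

section Calculus

lemma d_zero (X : V) : S.d X 0 = 0 :=
  map_zero (AddMonoidHom.mk' (S.d X) (S.d_add X))

lemma d_neg (X : V) (f : C) : S.d X (-f) = -S.d X f :=
  map_neg (AddMonoidHom.mk' (S.d X) (S.d_add X)) f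

lemma d_sub (X : V) (f₁ f₂ : C) : S.d X (f₁ - f₂) = S.d X f₁ - S.d X f₂ :=
  map_sub (AddMonoidHom.mk' (S.d X) (S.d_add X)) f₁ f₂

lemma d_one (X : V) : S.d X 1 = 0 := by
  simpa using S.d_const X 1

lemma d_real_smul (X : V) (r : ℝ) (f : C) : S.d X (r • f) = r • S.d X f := by
  rw [Algebra.smul_def, Algebra.smul_def, S.d_mul, S.d_const, zero_mul, zero_add]

lemma d_sum_frame (X : V) (f : Fin (2 * n + 1) → C) :
    S.d X (∑ i, S.sgn i • f i) = ∑ i, S.sgn i • S.d X (f i) := by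
  refine (map_sum (AddMonoidHom.mk' (S.d X) (S.d_add X)) _ _).trans ?_
  exact Finset.sum_congr rfl fun i _ => S.d_real_smul X (S.sgn i) (f i)

lemma nabla_zero_left (Y : V) : S.nabla 0 Y = 0 := by
  simpa using S.nabla_smulX 0 0 Y

lemma nabla_neg_left (X Y : V) : S.nabla (-X) Y = -S.nabla X Y :=
  map_neg (AddMonoidHom.mk' (S.nabla · Y) (S.nabla_addX · · Y)) X

lemma nabla_sub_left (X X' Y : V) : S.nabla (X - X') Y = S.nabla X Y - S.nabla X' Y :=
  map_sub (AddMonoidHom.mk' (S.nabla · Y) (S.nabla_addX · · Y)) X X'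

lemma nabla_zero_right (X : V) : S.nabla X 0 = 0 :=
  map_zero (AddMonoidHom.mk' (S.nabla X) (S.nabla_addY X))

lemma nabla_neg_right (X Y : V) : S.nabla X (-Y) = -S.nabla X Y :=
  map_neg (AddMonoidHom.mk' (S.nabla X) (S.nabla_addY X)) Y

lemma nabla_sub_right (X Y Y' : V) : S.nabla X (Y - Y') = S.nabla X Y - S.nabla X Y' :=
  map_sub (AddMonoidHom.mk' (S.nabla X) (S.nabla_addY X)) Y Y'

lemma bracket_eq (X Y : V) : S.bracket X Y = S.nabla X Y - S.nabla Y X :=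
  (S.nabla_torsion_free X Y).symm

lemma bracket_swap (X Y : V) : S.bracket Y X = -S.bracket X Y := by
  rw [S.bracket_eq, S.bracket_eq, neg_sub]

lemma bracket_self (X : V) : S.bracket X X = 0 := by
  rw [S.bracket_eq, sub_self]

lemma bracket_zero_right (X : V) : S.bracket X 0 = 0 := by
  rw [S.bracket_eq, S.nabla_zero_right, S.nabla_zero_left, sub_self]

lemma bracket_add_right (X Y Y' : V) :
    S.bracket X (Y + Y') = S.bracket X Y + S.bracket X Y' := by
  rw [S.bracket_eq, S.bracket_eq, S.bracket_eq, S.nabla_addY, S.nabla_addX]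
  abel

lemma bracket_neg_right (X Y : V) : S.bracket X (-Y) = -S.bracket X Y := by
  rw [S.bracket_eq, S.bracket_eq, S.nabla_neg_right, S.nabla_neg_left]
  abel

lemma bracket_smul_right (X : V) (f : C) (Y : V) :
    S.bracket X (f • Y) = S.d X f • Y + f • S.bracket X Y := by
  rw [S.bracket_eq, S.bracket_eq, S.nabla_leibniz, S.nabla_smulX, smul_sub]
  abel

lemma g_smul_left (f : C) (X Y : V) : S.g (f • X) Y = f * S.g X Y := by
  rw [map_smul, LinearMap.smul_apply, smul_eq_mul]

lemma g_smul_right (f : C) (X Y : V) : S.g X (f • Y) = f * S.g X Y := by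
  rw [map_smul, smul_eq_mul]

lemma g_real_smul_left (r : ℝ) (X Y : V) : S.g (r • X) Y = r • S.g X Y := by
  rw [← algebraMap_smul C r X, S.g_smul_left, ← Algebra.smul_def]

lemma isLinearMap_g_left (Y : V) : IsLinearMap C (S.g · Y) :=
  ⟨fun X X' => LinearMap.map_add₂ _ X X' Y, fun f X => LinearMap.map_smul₂ _ f X Y⟩

lemma isLinearMap_g_right (X : V) : IsLinearMap C (S.g X) :=
  ⟨map_add (S.g X), map_smul (S.g X)⟩

end Calculus

section Frame

variable {M : Type*} [AddCommGroup M] [Module C M]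

lemma sum_frame_smul (F : V → M) (hF : IsLinearMap C F) (X : V) :
    ∑ i, (S.sgn i • S.g X (S.e i)) • F (S.e i) = F X := by
  conv_rhs => rw [S.e_complete X]
  rw [← IsLinearMap.mk'_apply hF, map_sum]
  exact Finset.sum_congr rfl fun i _ => (hF.map_smul _ _).symm

lemma sum_frame_g_mul (θ : V → C) (hθ : IsLinearMap C θ) (X : V) :
    ∑ i, S.sgn i • (S.g X (S.e i) * θ (S.e i)) = θ X := by
  rw [← S.sum_frame_smul θ hθ X]
  exact Finset.sum_congr rfl fun i _ => (smul_mul_assoc _ _ _).symm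

lemma sum_frame_eta_mul (θ : V → C) (hθ : IsLinearMap C θ) :
    ∑ i, S.sgn i • (S.η (S.e i) * θ (S.e i)) = S.ε • θ S.ξ := by
  rw [← S.sum_frame_g_mul θ hθ, Finset.smul_sum]
  refine Finset.sum_congr rfl fun i _ => ?_
  rw [S.η_g, smul_mul_assoc, smul_comm S.ε (S.sgn i)]

lemma d_g_frame (X : V) (i k : Fin (2 * n + 1)) : S.d X (S.g (S.e i) (S.e k)) = 0 := by
  rw [S.e_orthonormal]
  split_ifs
  · exact S.d_const X _
  · exact S.d_zero X

lemma g_nabla_frame_add_swap (X : V) (i k : Fin (2 * n + 1)) :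
    S.g (S.nabla X (S.e i)) (S.e k) + S.g (S.nabla X (S.e k)) (S.e i) = 0 := by
  rw [S.g_symm (S.nabla X (S.e k)), ← S.nabla_metric, S.d_g_frame]

/-- The connection forms `g(∇_X e_i, e_k)` are skew, so their contributions to the trace of a
bilinear form cancel. -/
lemma sum_frame_nabla_frame (F : V → V → C) (hF₁ : ∀ y, IsLinearMap C (F · y))
    (hF₂ : ∀ x, IsLinearMap C (F x)) (X : V) :
    ∑ i, S.sgn i • (F (S.nabla X (S.e i)) (S.e i) + F (S.e i) (S.nabla X (S.e i))) = 0 := by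
  have expand₁ : ∀ i, F (S.nabla X (S.e i)) (S.e i)
      = ∑ k, S.sgn k • (S.g (S.nabla X (S.e i)) (S.e k) * F (S.e k) (S.e i)) := fun i =>
    (S.sum_frame_g_mul (F · (S.e i)) (hF₁ _) _).symm
  have expand₂ : ∀ i, F (S.e i) (S.nabla X (S.e i))
      = ∑ k, S.sgn k • (S.g (S.nabla X (S.e i)) (S.e k) * F (S.e i) (S.e k)) := fun i =>
    (S.sum_frame_g_mul (F (S.e i)) (hF₂ _) _).symm
  simp only [expand₁, expand₂, smul_add, Finset.smul_sum, Finset.sum_add_distrib]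
  rw [Finset.sum_comm (f := fun i k => S.sgn i • S.sgn k •
    (S.g (S.nabla X (S.e i)) (S.e k) * F (S.e i) (S.e k))), ← Finset.sum_add_distrib]
  refine Finset.sum_eq_zero fun i _ => ?_
  rw [← Finset.sum_add_distrib]
  refine Finset.sum_eq_zero fun k _ => ?_
  rw [smul_comm (S.sgn k) (S.sgn i), ← smul_add, ← smul_add, ← add_mul,
    S.g_nabla_frame_add_swap, zero_mul, smul_zero, smul_zero]

lemma trace_comp_comm (F G : V → V) (hF : IsLinearMap C F) (hG : IsLinearMap C G) :
    ∑ i, S.sgn i • S.g (F (G (S.e i))) (S.e i) = ∑ i, S.sgn i • S.g (G (F (S.e i))) (S.e i) := by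
  have expand : ∀ (A B : V → V), IsLinearMap C A → ∀ i, S.g (A (B (S.e i))) (S.e i)
      = ∑ k, S.sgn k • (S.g (B (S.e i)) (S.e k) * S.g (A (S.e k)) (S.e i)) :=
    fun A B hA i => (S.sum_frame_g_mul (fun x => S.g (A x) (S.e i))
      ⟨fun x y => by simp only [hA.map_add, LinearMap.map_add₂],
        fun f x => by simp only [hA.map_smul, S.g_smul_left, smul_eq_mul]⟩ _).symm
  simp only [expand F G hF, expand G F hG, Finset.smul_sum]
  rw [Finset.sum_comm]
  refine Finset.sum_congr rfl fun i _ => Finset.sum_congr rfl fun k _ => ?_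
  rw [smul_comm (S.sgn i) (S.sgn k), mul_comm]

end Frame

section Contact

lemma eps_mul_self : S.ε * S.ε = 1 := by
  rcases S.ε_pm with h | h <;> rw [h] <;> norm_num

lemma g_xi (X : V) : S.g S.ξ X = S.ε • S.η X := by
  rw [S.η_g, smul_smul, S.eps_mul_self, one_smul]

lemma g_xi_xi : S.g S.ξ S.ξ = algebraMap ℝ C S.ε := by
  rw [S.g_xi, S.η_ξ, Algebra.smul_def, mul_one]

lemma g_phi_left (X Y : V) : S.g (S.φ X) Y = -S.g X (S.φ Y) := by
  have h₁ := S.contact X Y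
  have h₂ := S.contact Y X
  rw [S.bracket_swap, map_neg] at h₂
  rw [S.g_symm]
  simp only [Algebra.smul_def] at h₁ h₂
  linear_combination h₁ + h₂

lemma g_phi_self (X : V) : S.g (S.φ X) X = 0 :=
  eq_zero_of_add_self_eq_zero (by linear_combination S.g_phi_left X X - S.g_symm X (S.φ X))

lemma phi_xi : S.φ S.ξ = 0 := by
  have h_phi : ∀ Z, S.g (S.φ S.ξ) (S.φ Z) = 0 := fun Z => by
    rw [S.g_compat, S.η_ξ, one_mul, S.g_xi, sub_self]
  refine S.g_nondeg _ fun Y => ?_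
  have h := h_phi (S.φ Y)
  rw [S.φ_sq, map_add, map_neg, S.g_smul_right, S.g_phi_self, mul_zero, add_zero,
    neg_eq_zero] at h
  exact h

lemma nabla_xi_xi : S.nabla S.ξ S.ξ = 0 := by
  rw [S.nabla_xi, S.phi_xi, S.bracket_zero_right, S.bracket_self]
  simp

lemma g_xi_nabla_xi (X : V) : S.g S.ξ (S.nabla X S.ξ) = 0 := by
  have h := S.nabla_metric X S.ξ S.ξ
  rw [S.g_xi_xi, S.d_const, S.g_symm (S.nabla X S.ξ)] at h
  exact eq_zero_of_add_self_eq_zero h.symm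

lemma eta_nabla_xi (X : V) : S.η (S.nabla X S.ξ) = 0 := by
  rw [S.η_g, S.g_xi_nabla_xi, smul_zero]

lemma isLinearMap_hTen : IsLinearMap C S.hTen := by
  constructor
  · intro X Y
    simp only [hTen, map_add, S.bracket_add_right, ← smul_add]
    congr 1
    abel
  · intro f X
    rw [hTen, hTen, map_smul, S.bracket_smul_right, S.bracket_smul_right, map_add, map_smul,
      map_smul, add_sub_add_left_eq_sub, ← smul_sub, smul_comm]

lemma d_xi_eta (X : V) : S.d S.ξ (S.η X) = S.η (S.bracket S.ξ X) := by
  have h := S.nabla_metric S.ξ S.ξ X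
  rw [S.bracket_eq, map_sub, S.eta_nabla_xi, sub_zero, S.η_g, S.η_g, S.d_real_smul, h,
    S.nabla_xi_xi, map_zero, LinearMap.zero_apply, zero_add]

lemma hTen_phi (X : V) : S.hTen (S.φ X) = -S.φ (S.hTen X) := by
  rw [eq_neg_iff_add_eq_zero]
  have hφφ : S.bracket S.ξ (S.φ (S.φ X)) = S.φ (S.φ (S.bracket S.ξ X)) := by
    rw [S.φ_sq, S.φ_sq, S.bracket_add_right, S.bracket_neg_right, S.bracket_smul_right,
      S.bracket_self, smul_zero, add_zero, S.d_xi_eta]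
  simp only [hTen, LinearMap.map_smul_of_tower, map_sub]
  rw [hφφ, ← smul_add, sub_add_sub_cancel, sub_self, smul_zero]

lemma nabla_xi_eq (X : V) : S.nabla X S.ξ = -(S.ε • S.φ X) - S.φ (S.hTen X) := by
  rw [S.nabla_xi, hTen, LinearMap.map_smul_of_tower, map_sub]

lemma trace_phi : ∑ i, S.sgn i • S.g (S.φ (S.e i)) (S.e i) = 0 :=
  Finset.sum_eq_zero fun i _ => by rw [S.g_phi_self, smul_zero]

lemma trace_phi_hTen : ∑ i, S.sgn i • S.g (S.φ (S.hTen (S.e i))) (S.e i) = 0 := by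
  refine eq_zero_of_add_self_eq_zero ?_
  conv_lhs => arg 2; rw [S.trace_comp_comm _ _ S.φ.isLinear S.isLinearMap_hTen]
  rw [← Finset.sum_add_distrib]
  refine Finset.sum_eq_zero fun i _ => ?_
  rw [S.hTen_phi, map_neg, LinearMap.neg_apply, smul_neg, add_neg_cancel]

lemma trace_nabla_xi : ∑ i, S.sgn i • S.g (S.nabla (S.e i) S.ξ) (S.e i) = 0 := by
  have h : ∀ i, S.sgn i • S.g (S.nabla (S.e i) S.ξ) (S.e i)
      = -(S.ε • (S.sgn i • S.g (S.φ (S.e i)) (S.e i)))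
        - S.sgn i • S.g (S.φ (S.hTen (S.e i))) (S.e i) := fun i => by
    rw [S.nabla_xi_eq, LinearMap.map_sub₂, LinearMap.map_neg₂, S.g_real_smul_left, smul_sub,
      smul_neg, smul_comm]
  rw [Finset.sum_congr rfl fun i _ => h i, Finset.sum_sub_distrib, Finset.sum_neg_distrib,
    ← Finset.smul_sum, S.trace_phi, S.trace_phi_hTen, smul_zero, neg_zero, sub_zero]

def nablaEta (X Y : V) : C := S.d X (S.η Y) - S.η (S.nabla X Y)

lemma nablaEta_eq (X Y : V) : S.nablaEta X Y = S.ε • S.g (S.nabla X S.ξ) Y := by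
  rw [nablaEta, S.η_g Y, S.η_g (S.nabla X Y), S.d_real_smul, S.nabla_metric, smul_add,
    add_sub_cancel_right]

lemma eta_nabla (X Y : V) : S.η (S.nabla X Y) = S.d X (S.η Y) - S.nablaEta X Y := by
  rw [nablaEta, sub_sub_cancel]

lemma nablaEta_xi_left (Y : V) : S.nablaEta S.ξ Y = 0 := by
  rw [S.nablaEta_eq, S.nabla_xi_xi, map_zero, LinearMap.zero_apply, smul_zero]

lemma nablaEta_xi_right (X : V) : S.nablaEta X S.ξ = 0 := by
  rw [nablaEta, S.η_ξ, S.d_one, S.eta_nabla_xi, sub_zero]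

lemma isLinearMap_nablaEta_left (Y : V) : IsLinearMap C (S.nablaEta · Y) := by
  simp only [S.nablaEta_eq]
  constructor
  · intro X X'
    rw [S.nabla_addX, LinearMap.map_add₂, smul_add]
  · intro f X
    rw [S.nabla_smulX, S.g_smul_left, smul_eq_mul, mul_smul_comm]

lemma isLinearMap_nablaEta_right (X : V) : IsLinearMap C (S.nablaEta X) := by
  constructor
  · intro Y Y'
    simp only [S.nablaEta_eq, map_add, smul_add]
  · intro f Y
    rw [S.nablaEta_eq, S.nablaEta_eq, S.g_smul_right, smul_eq_mul, mul_smul_comm]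

lemma trace_nablaEta : ∑ i, S.sgn i • S.nablaEta (S.e i) (S.e i) = 0 := by
  simp only [S.nablaEta_eq, smul_comm (S.sgn _) S.ε, ← Finset.smul_sum, S.trace_nabla_xi,
    smul_zero]

end Contact

section Curvature

lemma R_swap (X Y Z : V) : S.R X Y Z = -S.R Y X Z := by
  rw [R, R, S.bracket_swap, S.nabla_neg_left]
  abel

lemma R_self (X Z : V) : S.R X X Z = 0 := by
  rw [R, S.bracket_self, S.nabla_zero_left, sub_self, sub_zero]

lemma isLinearMap_R_mid (X Z : V) : IsLinearMap C (S.R X · Z) := by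
  constructor
  · intro Y Y'
    simp only [R, S.nabla_addX, S.nabla_addY, S.bracket_add_right]
    abel
  · intro f Y
    simp only [R, S.nabla_smulX, S.nabla_leibniz, S.bracket_smul_right, S.nabla_addX, smul_sub]
    abel

lemma isLinearMap_R_left (Y Z : V) : IsLinearMap C (S.R · Y Z) := by
  constructor
  · intro X X'
    rw [S.R_swap, (S.isLinearMap_R_mid Y Z).map_add, S.R_swap Y X, S.R_swap Y X']
    abel
  · intro f X
    rw [S.R_swap, (S.isLinearMap_R_mid Y Z).map_smul, S.R_swap Y X, smul_neg, neg_neg]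

lemma g_R_swap (X Y Z U : V) : S.g (S.R X Y Z) U = -S.g (S.R X Y U) Z := by
  have h := S.bracket_apply X Y (S.g Z U)
  simp only [S.nabla_metric, S.d_add] at h
  simp only [R, LinearMap.map_sub₂]
  rw [S.g_symm Z (S.nabla X (S.nabla Y U)), S.g_symm Z (S.nabla Y (S.nabla X U)),
    S.g_symm Z (S.nabla (S.bracket X Y) U)] at h
  linear_combination -h

def hess (W X Y : V) : V := S.nabla X (S.nabla Y W) - S.nabla (S.nabla X Y) W

lemma hess_sub_hess_swap (W X Y : V) : S.hess W X Y - S.hess W Y X = S.R X Y W := by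
  simp only [hess, R, S.bracket_eq, S.nabla_sub_left]
  abel

/-- The Ricci identity. -/
lemma covDeriv_hess_sub_swap (W U X Y : V) :
    (S.nabla U (S.hess W X Y) - S.hess W (S.nabla U X) Y - S.hess W X (S.nabla U Y))
      - (S.nabla X (S.hess W U Y) - S.hess W (S.nabla X U) Y - S.hess W U (S.nabla X Y))
    = S.R U X (S.nabla Y W) - S.nabla (S.R U X Y) W := by
  simp only [hess, R, S.bracket_eq, S.nabla_sub_left, S.nabla_sub_right]
  abel

end Curvature

section CovariantDerivative

def covDeriv2 (h : V → V → C) (U X Y : V) : C :=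
  S.d U (h X Y) - h (S.nabla U X) Y - h X (S.nabla U Y)

def covDeriv3 (F : V → V → V → C) (U X Y Z : V) : C :=
  S.d U (F X Y Z) - F (S.nabla U X) Y Z - F X (S.nabla U Y) Z - F X Y (S.nabla U Z)

lemma sum_covDeriv3_traceXY (F : V → V → V → C) (hF₁ : ∀ y z, IsLinearMap C (F · y z))
    (hF₂ : ∀ x z, IsLinearMap C (F x · z)) (U Z : V) :
    ∑ j, S.sgn j • S.covDeriv3 F U (S.e j) (S.e j) Z
      = S.d U (∑ j, S.sgn j • F (S.e j) (S.e j) Z)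
        - ∑ j, S.sgn j • F (S.e j) (S.e j) (S.nabla U Z) := by
  have h := S.sum_frame_nabla_frame (F · · Z) (hF₁ · Z) (hF₂ · Z) U
  simp only [covDeriv3, S.d_sum_frame, smul_sub, smul_add, Finset.sum_sub_distrib,
    Finset.sum_add_distrib] at h ⊢
  linear_combination -h

lemma sum_covDeriv3_traceXZ (F : V → V → V → C) (hF₁ : ∀ y z, IsLinearMap C (F · y z))
    (hF₃ : ∀ x y, IsLinearMap C (F x y)) (U Y : V) :
    ∑ j, S.sgn j • S.covDeriv3 F U (S.e j) Y (S.e j)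
      = S.d U (∑ j, S.sgn j • F (S.e j) Y (S.e j))
        - ∑ j, S.sgn j • F (S.e j) (S.nabla U Y) (S.e j) := by
  have h := S.sum_frame_nabla_frame (F · Y ·) (hF₁ Y) (hF₃ · Y) U
  simp only [covDeriv3, S.d_sum_frame, smul_sub, smul_add, Finset.sum_sub_distrib,
    Finset.sum_add_distrib] at h ⊢
  linear_combination -h

lemma sum_covDeriv3_traceYZ (F : V → V → V → C) (hF₂ : ∀ x z, IsLinearMap C (F x · z))
    (hF₃ : ∀ x y, IsLinearMap C (F x y)) (U X : V) :
    ∑ j, S.sgn j • S.covDeriv3 F U X (S.e j) (S.e j)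
      = S.d U (∑ j, S.sgn j • F X (S.e j) (S.e j))
        - ∑ j, S.sgn j • F (S.nabla U X) (S.e j) (S.e j) := by
  have h := S.sum_frame_nabla_frame (F X) (hF₂ X) (hF₃ X) U
  simp only [covDeriv3, S.d_sum_frame, smul_sub, smul_add, Finset.sum_sub_distrib,
    Finset.sum_add_distrib] at h ⊢
  linear_combination -h

def hessForm (W X Y Z : V) : C := S.g (S.hess W X Y) Z

lemma covDeriv3_hessForm_sub_swap (W U X Y Z : V) :
    S.covDeriv3 (S.hessForm W) U X Y Z - S.covDeriv3 (S.hessForm W) X U Y Z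
      = S.g (S.R U X (S.nabla Y W)) Z - S.g (S.nabla (S.R U X Y) W) Z := by
  have h : ∀ U X, S.covDeriv3 (S.hessForm W) U X Y Z
      = S.g (S.nabla U (S.hess W X Y) - S.hess W (S.nabla U X) Y - S.hess W X (S.nabla U Y)) Z :=
    fun U X => by
      simp only [covDeriv3, hessForm, S.nabla_metric, LinearMap.map_sub₂]
      ring
  rw [h, h, ← LinearMap.map_sub₂, ← LinearMap.map_sub₂, S.covDeriv_hess_sub_swap]

def curvForm (W X Y Z : V) : C := S.g (S.R X Y W) Z

lemma isLinearMap_curvForm₁ (W Y Z : V) : IsLinearMap C (S.curvForm W · Y Z) :=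
  ⟨fun X X' => by simp only [curvForm, (S.isLinearMap_R_left Y W).map_add, LinearMap.map_add₂],
    fun f X => by simp only [curvForm, (S.isLinearMap_R_left Y W).map_smul, S.g_smul_left,
      smul_eq_mul]⟩

lemma isLinearMap_curvForm₂ (W X Z : V) : IsLinearMap C (S.curvForm W X · Z) :=
  ⟨fun Y Y' => by simp only [curvForm, (S.isLinearMap_R_mid X W).map_add, LinearMap.map_add₂],
    fun f Y => by simp only [curvForm, (S.isLinearMap_R_mid X W).map_smul, S.g_smul_left,
      smul_eq_mul]⟩

lemma isLinearMap_curvForm₃ (W X Y : V) : IsLinearMap C (S.curvForm W X Y) :=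
  S.isLinearMap_g_right _

lemma sum_covDeriv3_curvForm_traceXY (W U Z : V) :
    ∑ j, S.sgn j • S.covDeriv3 (S.curvForm W) U (S.e j) (S.e j) Z = 0 := by
  rw [S.sum_covDeriv3_traceXY _ (S.isLinearMap_curvForm₁ W) (S.isLinearMap_curvForm₂ W)]
  simp [curvForm, S.R_self, S.d_zero]

lemma sum_covDeriv3_curvForm_traceXZ (W U Y : V) :
    ∑ j, S.sgn j • S.covDeriv3 (S.curvForm W) U (S.e j) Y (S.e j)
      = S.d U (S.Ric Y W) - S.Ric (S.nabla U Y) W :=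
  S.sum_covDeriv3_traceXZ _ (S.isLinearMap_curvForm₁ W) (S.isLinearMap_curvForm₃ W) U Y

lemma sum_curvForm_traceYZ (W X : V) :
    ∑ j, S.sgn j • S.curvForm W X (S.e j) (S.e j) = -S.Ric X W := by
  simp only [curvForm, Ric, S.R_swap X, LinearMap.map_neg₂, smul_neg, Finset.sum_neg_distrib]

lemma sum_covDeriv3_curvForm_traceYZ (W U X : V) :
    ∑ j, S.sgn j • S.covDeriv3 (S.curvForm W) U X (S.e j) (S.e j)
      = -(S.d U (S.Ric X W) - S.Ric (S.nabla U X) W) := by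
  rw [S.sum_covDeriv3_traceYZ _ (S.isLinearMap_curvForm₂ W) (S.isLinearMap_curvForm₃ W),
    S.sum_curvForm_traceYZ, S.sum_curvForm_traceYZ, S.d_neg]
  ring

end CovariantDerivative

section EtaEinstein

def etaEinsteinForm (c m : ℝ) (X Y : V) : C := c • S.g X Y + m • (S.η X * S.η Y)

variable (c m : ℝ)

lemma covDeriv2_etaEinsteinForm (U X Y : V) :
    S.covDeriv2 (S.etaEinsteinForm c m) U X Y
      = m • (S.nablaEta U X * S.η Y + S.η X * S.nablaEta U Y) := by
  rw [covDeriv2, etaEinsteinForm, etaEinsteinForm, etaEinsteinForm, S.d_add, S.d_real_smul,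
    S.d_real_smul, S.d_mul, S.nabla_metric, S.eta_nabla, S.eta_nabla]
  simp only [Algebra.smul_def]
  ring

lemma covDeriv2_etaEinsteinForm_swap (U X Y : V) :
    S.covDeriv2 (S.etaEinsteinForm c m) U X Y = S.covDeriv2 (S.etaEinsteinForm c m) U Y X := by
  simp only [S.covDeriv2_etaEinsteinForm]
  congr 1
  ring

lemma isLinearMap_covDeriv2_etaEinsteinForm₁ (X Y : V) :
    IsLinearMap C (S.covDeriv2 (S.etaEinsteinForm c m) · X Y) := by
  have h := S.isLinearMap_nablaEta_left
  constructor <;> intros <;>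
    simp only [S.covDeriv2_etaEinsteinForm, (h _).map_add, (h _).map_smul, smul_eq_mul,
      Algebra.smul_def] <;> ring

lemma isLinearMap_covDeriv2_etaEinsteinForm₂ (U Y : V) :
    IsLinearMap C (S.covDeriv2 (S.etaEinsteinForm c m) U · Y) := by
  have h := S.isLinearMap_nablaEta_right U
  constructor <;> intros <;>
    simp only [S.covDeriv2_etaEinsteinForm, h.map_add, h.map_smul, map_add, map_smul,
      smul_eq_mul, Algebra.smul_def] <;> ring

lemma isLinearMap_covDeriv2_etaEinsteinForm₃ (U X : V) :
    IsLinearMap C (S.covDeriv2 (S.etaEinsteinForm c m) U X) := by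
  rw [show S.covDeriv2 (S.etaEinsteinForm c m) U X = (S.covDeriv2 (S.etaEinsteinForm c m) U · X)
    from funext (S.covDeriv2_etaEinsteinForm_swap c m U X)]
  exact S.isLinearMap_covDeriv2_etaEinsteinForm₂ c m U X

lemma sum_covDeriv2_etaEinsteinForm_traceUX (Z : V) :
    ∑ j, S.sgn j • S.covDeriv2 (S.etaEinsteinForm c m) (S.e j) (S.e j) Z = 0 := by
  have h : ∀ j, S.sgn j • S.covDeriv2 (S.etaEinsteinForm c m) (S.e j) (S.e j) Z
      = m • ((S.sgn j • S.nablaEta (S.e j) (S.e j)) * S.η Z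
        + S.sgn j • (S.η (S.e j) * S.nablaEta (S.e j) Z)) := fun j => by
    rw [S.covDeriv2_etaEinsteinForm, smul_comm, smul_add, smul_mul_assoc]
  rw [Finset.sum_congr rfl fun j _ => h j, ← Finset.smul_sum, Finset.sum_add_distrib,
    ← Finset.sum_mul, S.trace_nablaEta, zero_mul, zero_add,
    S.sum_frame_eta_mul _ (S.isLinearMap_nablaEta_left Z), S.nablaEta_xi_left, smul_zero,
    smul_zero]

lemma sum_covDeriv2_etaEinsteinForm_traceXY (U : V) :
    ∑ j, S.sgn j • S.covDeriv2 (S.etaEinsteinForm c m) U (S.e j) (S.e j) = 0 := by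
  simp only [S.covDeriv2_etaEinsteinForm, mul_comm (S.nablaEta U _), smul_comm (S.sgn _) m,
    ← Finset.smul_sum, smul_add, Finset.sum_add_distrib,
    S.sum_frame_eta_mul _ (S.isLinearMap_nablaEta_right U), S.nablaEta_xi_right, smul_zero,
    add_zero]

lemma sum_covDeriv3_covDeriv2_etaEinsteinForm_traceXY (U Z : V) :
    ∑ j, S.sgn j • S.covDeriv3 (S.covDeriv2 (S.etaEinsteinForm c m)) U (S.e j) (S.e j) Z = 0 := by
  rw [S.sum_covDeriv3_traceXY _ (S.isLinearMap_covDeriv2_etaEinsteinForm₁ c m)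
    (S.isLinearMap_covDeriv2_etaEinsteinForm₂ c m), S.sum_covDeriv2_etaEinsteinForm_traceUX,
    S.sum_covDeriv2_etaEinsteinForm_traceUX, S.d_zero, sub_zero]

lemma sum_covDeriv3_covDeriv2_etaEinsteinForm_traceYZ (U X : V) :
    ∑ j, S.sgn j • S.covDeriv3 (S.covDeriv2 (S.etaEinsteinForm c m)) U X (S.e j) (S.e j) = 0 := by
  rw [S.sum_covDeriv3_traceYZ _ (S.isLinearMap_covDeriv2_etaEinsteinForm₂ c m)
    (S.isLinearMap_covDeriv2_etaEinsteinForm₃ c m), S.sum_covDeriv2_etaEinsteinForm_traceXY,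
    S.sum_covDeriv2_etaEinsteinForm_traceXY, S.d_zero, sub_zero]

end EtaEinstein

section Koszul

def koszulForm (h : V → V → C) (X Y Z : V) : C :=
  S.covDeriv2 h X Y Z + S.covDeriv2 h Y X Z - S.covDeriv2 h Z X Y

variable {h : V → V → C} {W : V}

lemma covDeriv2_eq_hessForm_add (hW : ∀ X Y, h X Y = S.g (S.nabla X W) Y + S.g X (S.nabla Y W))
    (U Y Z : V) : S.covDeriv2 h U Y Z = S.hessForm W U Y Z + S.hessForm W U Z Y := by
  rw [covDeriv2, hessForm, hessForm, hess, hess, hW, hW, hW, S.d_add, S.nabla_metric,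
    S.nabla_metric, LinearMap.map_sub₂, LinearMap.map_sub₂, S.g_symm (S.nabla U (S.nabla Z W)),
    S.g_symm (S.nabla (S.nabla U Z) W)]
  ring

/-- Koszul-type formula: `∇²W` is determined by `h = £_W g` and `R(·,·)W`. -/
lemma two_hessForm_eq (hW : ∀ X Y, h X Y = S.g (S.nabla X W) Y + S.g X (S.nabla Y W))
    (X Y Z : V) :
    S.hessForm W X Y Z + S.hessForm W X Y Z
      = S.koszulForm h X Y Z + S.curvForm W X Y Z - S.curvForm W X Z Y - S.curvForm W Y Z X := by
  have hcurv : ∀ P Q R, S.curvForm W P Q R = S.hessForm W P Q R - S.hessForm W Q P R :=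
    fun P Q R => by rw [curvForm, hessForm, hessForm, ← LinearMap.map_sub₂, S.hess_sub_hess_swap]
  simp only [koszulForm, S.covDeriv2_eq_hessForm_add hW, hcurv]
  ring

lemma two_covDeriv3_hessForm_eq (hW : ∀ X Y, h X Y = S.g (S.nabla X W) Y + S.g X (S.nabla Y W))
    (U X Y Z : V) :
    S.covDeriv3 (S.hessForm W) U X Y Z + S.covDeriv3 (S.hessForm W) U X Y Z
      = S.covDeriv3 (S.koszulForm h) U X Y Z + S.covDeriv3 (S.curvForm W) U X Y Z
        - S.covDeriv3 (S.curvForm W) U X Z Y - S.covDeriv3 (S.curvForm W) U Y Z X := by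
  have hd := congrArg (S.d U) (S.two_hessForm_eq hW X Y Z)
  rw [S.d_add, S.d_sub, S.d_sub, S.d_add] at hd
  unfold covDeriv3
  linear_combination hd - S.two_hessForm_eq hW (S.nabla U X) Y Z
    - S.two_hessForm_eq hW X (S.nabla U Y) Z - S.two_hessForm_eq hW X Y (S.nabla U Z)

lemma covDeriv3_koszulForm (h : V → V → C) (U X Y Z : V) :
    S.covDeriv3 (S.koszulForm h) U X Y Z = S.covDeriv3 (S.covDeriv2 h) U X Y Z
      + S.covDeriv3 (S.covDeriv2 h) U Y X Z - S.covDeriv3 (S.covDeriv2 h) U Z X Y := by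
  unfold covDeriv3 koszulForm
  rw [S.d_sub, S.d_add]
  ring

end Koszul

section DoubleTrace

lemma sum_sum_sgn_mul_smul (T : Fin (2 * n + 1) → Fin (2 * n + 1) → C) :
    ∑ i, ∑ j, (S.sgn i * S.sgn j) • T i j = ∑ i, S.sgn i • ∑ j, S.sgn j • T i j := by
  simp only [Finset.smul_sum, mul_smul]

lemma sum_sum_sgn_mul_smul_comm (T : Fin (2 * n + 1) → Fin (2 * n + 1) → C) :
    ∑ i, ∑ j, (S.sgn i * S.sgn j) • T i j = ∑ j, S.sgn j • ∑ i, S.sgn i • T i j := by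
  rw [Finset.sum_comm]
  refine Finset.sum_congr rfl fun j _ => ?_
  rw [Finset.smul_sum]
  exact Finset.sum_congr rfl fun i _ => by rw [mul_comm, mul_smul]

/-- For `F = ∇²W` this double trace is evaluated by the Ricci identity. -/
def commTrace (F : V → V → V → C) : C :=
  ∑ i, ∑ j, (S.sgn i * S.sgn j) •
    (S.covDeriv3 F (S.e i) (S.e j) (S.e j) (S.e i) - S.covDeriv3 F (S.e j) (S.e i) (S.e j) (S.e i))

lemma commTrace_koszulForm_eq_zero {h : V → V → C}
    (hsymm : ∀ U X Y, S.covDeriv2 h U X Y = S.covDeriv2 h U Y X)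
    (hXY : ∀ U Z, ∑ j, S.sgn j • S.covDeriv3 (S.covDeriv2 h) U (S.e j) (S.e j) Z = 0)
    (hYZ : ∀ U X, ∑ j, S.sgn j • S.covDeriv3 (S.covDeriv2 h) U X (S.e j) (S.e j) = 0) :
    S.commTrace (S.koszulForm h) = 0 := by
  have hD : ∀ U X Y Z, S.covDeriv3 (S.covDeriv2 h) U X Y Z = S.covDeriv3 (S.covDeriv2 h) U X Z Y :=
    fun U X Y Z => by
      rw [covDeriv3, covDeriv3, hsymm X Y Z, hsymm (S.nabla U X) Y Z, hsymm X (S.nabla U Y) Z,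
        hsymm X Y (S.nabla U Z)]
      ring
  have hterm : ∀ i j, S.covDeriv3 (S.koszulForm h) (S.e i) (S.e j) (S.e j) (S.e i)
      - S.covDeriv3 (S.koszulForm h) (S.e j) (S.e i) (S.e j) (S.e i)
      = S.covDeriv3 (S.covDeriv2 h) (S.e i) (S.e j) (S.e j) (S.e i)
        + S.covDeriv3 (S.covDeriv2 h) (S.e i) (S.e j) (S.e j) (S.e i)
        - S.covDeriv3 (S.covDeriv2 h) (S.e i) (S.e i) (S.e j) (S.e j)
        - S.covDeriv3 (S.covDeriv2 h) (S.e j) (S.e j) (S.e i) (S.e i) := fun i j => by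
    rw [S.covDeriv3_koszulForm, S.covDeriv3_koszulForm, hD (S.e j) (S.e i) (S.e j) (S.e i)]
    ring
  simp only [commTrace, hterm, smul_add, smul_sub, Finset.sum_add_distrib, Finset.sum_sub_distrib]
  rw [S.sum_sum_sgn_mul_smul, S.sum_sum_sgn_mul_smul, S.sum_sum_sgn_mul_smul_comm]
  simp only [hXY, hYZ, smul_zero, Finset.sum_const_zero, sub_zero, add_zero]

end DoubleTrace

section RicciPairing

def divergence (W : V) : C := ∑ i, S.sgn i • S.g (S.e i) (S.nabla (S.e i) W)

/-- The contraction `Ric^{ij} ∇_i W_j`. -/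
def ricciPairing (W : V) : C := ∑ j, S.sgn j • S.Ric (S.e j) (S.nabla (S.e j) W)

variable {a b : ℝ}

lemma isLinearMap_nabla_left_comp {M : Type*} [AddCommGroup M] [Module C M] (θ : V → M)
    (hθ : IsLinearMap C θ) (W : V) : IsLinearMap C (fun X => θ (S.nabla X W)) :=
  ⟨fun X X' => by simp only [S.nabla_addX, hθ.map_add],
    fun f X => by simp only [S.nabla_smulX, hθ.map_smul]⟩

lemma sum_frame_Ric_mul (hRic : ∀ X Y, S.Ric X Y = a • S.g X Y + b • (S.η X * S.η Y))
    (θ : V → C) (hθ : IsLinearMap C θ) (X : V) :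
    ∑ k, S.sgn k • (S.Ric X (S.e k) * θ (S.e k)) = a • θ X + (b * S.ε) • (S.η X * θ S.ξ) := by
  have h : ∀ k, S.sgn k • (S.Ric X (S.e k) * θ (S.e k))
      = a • (S.sgn k • (S.g X (S.e k) * θ (S.e k)))
        + (b • S.η X) * (S.sgn k • (S.η (S.e k) * θ (S.e k))) := fun k => by
    rw [hRic]
    simp only [Algebra.smul_def]
    ring
  rw [Finset.sum_congr rfl fun k _ => h k, Finset.sum_add_distrib, ← Finset.smul_sum,
    ← Finset.mul_sum, S.sum_frame_g_mul θ hθ, S.sum_frame_eta_mul θ hθ]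
  simp only [Algebra.smul_def, map_mul]
  ring

lemma ricciPairing_eq (hRic : ∀ X Y, S.Ric X Y = a • S.g X Y + b • (S.η X * S.η Y)) (W : V) :
    S.ricciPairing W = a • S.divergence W + b • S.g S.ξ (S.nabla S.ξ W) := by
  have h : ∀ j, S.sgn j • S.Ric (S.e j) (S.nabla (S.e j) W)
      = a • (S.sgn j • S.g (S.e j) (S.nabla (S.e j) W))
        + b • (S.sgn j • (S.η (S.e j) * S.η (S.nabla (S.e j) W))) := fun j => by
    rw [hRic, smul_add, smul_comm (S.sgn j) a, smul_comm (S.sgn j) b]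
  rw [ricciPairing, Finset.sum_congr rfl fun j _ => h j, Finset.sum_add_distrib,
    ← Finset.smul_sum, ← Finset.smul_sum,
    S.sum_frame_eta_mul _ (S.isLinearMap_nabla_left_comp S.η S.η.isLinear W), ← S.g_xi]
  rfl

lemma sum_frame_covDeriv_Ric (hRic : ∀ X Y, S.Ric X Y = a • S.g X Y + b • (S.η X * S.η Y))
    (W : V) :
    ∑ j, S.sgn j • (S.d (S.e j) (S.Ric (S.e j) W) - S.Ric (S.nabla (S.e j) (S.e j)) W)
      = S.ricciPairing W := by
  have h : ∀ j, S.sgn j • (S.d (S.e j) (S.Ric (S.e j) W) - S.Ric (S.nabla (S.e j) (S.e j)) W)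
      = a • (S.sgn j • S.g (S.e j) (S.nabla (S.e j) W))
        + b • ((S.sgn j • S.nablaEta (S.e j) (S.e j)) * S.η W)
        + b • (S.sgn j • (S.η (S.e j) * S.d (S.e j) (S.η W))) := fun j => by
    rw [hRic, hRic, S.d_add, S.d_real_smul, S.d_real_smul, S.d_mul, S.nabla_metric,
      S.eta_nabla]
    simp only [Algebra.smul_def]
    ring
  rw [Finset.sum_congr rfl fun j _ => h j, Finset.sum_add_distrib, Finset.sum_add_distrib,
    ← Finset.smul_sum, ← Finset.smul_sum, ← Finset.smul_sum, ← Finset.sum_mul, S.trace_nablaEta,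
    zero_mul, smul_zero, add_zero, S.sum_frame_eta_mul (fun X => S.d X (S.η W))
      ⟨fun X X' => S.d_addX _ X X', fun f X => S.d_smulX f _ X⟩, S.ricciPairing_eq hRic]
  have hξ : S.d S.ξ (S.η W) = S.η (S.nabla S.ξ W) := by
    rw [S.eta_nabla, S.nablaEta_xi_left, sub_zero]
  rw [hξ, ← S.g_xi]
  rfl

lemma sum_sum_g_R_nabla (W : V) :
    ∑ i, ∑ j, (S.sgn i * S.sgn j) • S.g (S.R (S.e i) (S.e j) (S.nabla (S.e j) W)) (S.e i)
      = S.ricciPairing W :=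
  S.sum_sum_sgn_mul_smul_comm _

lemma sum_g_nabla_R (W : V) (i : Fin (2 * n + 1)) :
    ∑ j, S.sgn j • S.g (S.nabla (S.R (S.e i) (S.e j) (S.e j)) W) (S.e i)
      = ∑ k, S.sgn k • (S.Ric (S.e i) (S.e k) * S.g (S.nabla (S.e k) W) (S.e i)) := by
  have hθ := S.isLinearMap_nabla_left_comp (S.g · (S.e i)) (S.isLinearMap_g_left _) W
  have expand : ∀ j, S.g (S.nabla (S.R (S.e i) (S.e j) (S.e j)) W) (S.e i)
      = ∑ k, S.sgn k • (S.g (S.R (S.e j) (S.e i) (S.e k)) (S.e j)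
          * S.g (S.nabla (S.e k) W) (S.e i)) := fun j => by
    rw [← S.sum_frame_g_mul _ hθ]
    refine Finset.sum_congr rfl fun k _ => ?_
    rw [S.g_R_swap, S.R_swap, LinearMap.map_neg₂, neg_neg]
  simp only [expand, Finset.smul_sum]
  rw [Finset.sum_comm]
  refine Finset.sum_congr rfl fun k _ => ?_
  simp only [Ric, Finset.smul_sum, Finset.sum_mul, smul_mul_assoc]
  exact Finset.sum_congr rfl fun j _ => smul_comm _ _ _

lemma sum_sum_g_nabla_R (hRic : ∀ X Y, S.Ric X Y = a • S.g X Y + b • (S.η X * S.η Y)) (W : V) :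
    ∑ i, ∑ j, (S.sgn i * S.sgn j) • S.g (S.nabla (S.R (S.e i) (S.e j) (S.e j)) W) (S.e i)
      = S.ricciPairing W := by
  have h : ∀ i, S.sgn i • ∑ j, S.sgn j • S.g (S.nabla (S.R (S.e i) (S.e j) (S.e j)) W) (S.e i)
      = a • (S.sgn i • S.g (S.e i) (S.nabla (S.e i) W))
        + (b * S.ε) • (S.sgn i • (S.η (S.e i) * S.g (S.nabla S.ξ W) (S.e i))) := fun i => by
    rw [S.sum_g_nabla_R, S.sum_frame_Ric_mul hRic _
      (S.isLinearMap_nabla_left_comp (S.g · (S.e i)) (S.isLinearMap_g_left _) W), smul_add,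
      smul_comm (S.sgn i) a, smul_comm (S.sgn i) (b * S.ε), S.g_symm (S.nabla _ W)]
  rw [S.sum_sum_sgn_mul_smul, Finset.sum_congr rfl fun i _ => h i, Finset.sum_add_distrib,
    ← Finset.smul_sum, ← Finset.smul_sum, S.sum_frame_eta_mul _ (S.isLinearMap_g_right _),
    S.ricciPairing_eq hRic, mul_smul, smul_smul S.ε, S.eps_mul_self, one_smul, S.g_symm _ S.ξ]
  rfl

lemma commTrace_hessForm (hRic : ∀ X Y, S.Ric X Y = a • S.g X Y + b • (S.η X * S.η Y))
    (W : V) : S.commTrace (S.hessForm W) = 0 := by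
  simp only [commTrace, S.covDeriv3_hessForm_sub_swap, smul_sub, Finset.sum_sub_distrib]
  rw [S.sum_sum_g_R_nabla, S.sum_sum_g_nabla_R hRic, sub_self]

lemma commTrace_curvForm (hRic : ∀ X Y, S.Ric X Y = a • S.g X Y + b • (S.η X * S.η Y))
    (W : V) : S.commTrace (S.curvForm W) = -S.ricciPairing W := by
  simp only [commTrace, smul_sub, Finset.sum_sub_distrib]
  rw [S.sum_sum_sgn_mul_smul, S.sum_sum_sgn_mul_smul_comm]
  simp only [S.sum_covDeriv3_curvForm_traceXY, S.sum_covDeriv3_curvForm_traceXZ, smul_zero,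
    Finset.sum_const_zero, S.sum_frame_covDeriv_Ric hRic, zero_sub]

lemma sum_sum_covDeriv3_curvForm_traceUY_traceXZ
    (hRic : ∀ X Y, S.Ric X Y = a • S.g X Y + b • (S.η X * S.η Y)) (W : V) :
    ∑ i, ∑ j, (S.sgn i * S.sgn j) • S.covDeriv3 (S.curvForm W) (S.e i) (S.e j) (S.e i) (S.e j)
      = S.ricciPairing W := by
  rw [S.sum_sum_sgn_mul_smul]
  simp only [S.sum_covDeriv3_curvForm_traceXZ, S.sum_frame_covDeriv_Ric hRic]

lemma sum_sum_covDeriv3_curvForm_traceUZ_traceXY (W : V) :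
    ∑ i, ∑ j, (S.sgn i * S.sgn j) • S.covDeriv3 (S.curvForm W) (S.e j) (S.e i) (S.e i) (S.e j)
      = 0 := by
  rw [S.sum_sum_sgn_mul_smul_comm]
  simp only [S.sum_covDeriv3_curvForm_traceXY, smul_zero, Finset.sum_const_zero]

lemma sum_sum_covDeriv3_curvForm_traceUX_traceYZ
    (hRic : ∀ X Y, S.Ric X Y = a • S.g X Y + b • (S.η X * S.η Y)) (W : V) :
    ∑ i, ∑ j, (S.sgn i * S.sgn j) • S.covDeriv3 (S.curvForm W) (S.e j) (S.e j) (S.e i) (S.e i)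
      = -S.ricciPairing W := by
  rw [S.sum_sum_sgn_mul_smul_comm]
  simp only [S.sum_covDeriv3_curvForm_traceYZ, smul_neg, Finset.sum_neg_distrib,
    S.sum_frame_covDeriv_Ric hRic]

end RicciPairing

theorem ricciPairing_eq_zero {a b c m : ℝ}
    (hRic : ∀ X Y, S.Ric X Y = a • S.g X Y + b • (S.η X * S.η Y)) {W : V}
    (hW : ∀ X Y, S.etaEinsteinForm c m X Y = S.g (S.nabla X W) Y + S.g X (S.nabla Y W)) :
    S.ricciPairing W = 0 := by
  have key : S.commTrace (S.hessForm W) + S.commTrace (S.hessForm W)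
      = S.commTrace (S.koszulForm (S.etaEinsteinForm c m)) + S.commTrace (S.curvForm W)
        - ∑ i, ∑ j, (S.sgn i * S.sgn j) •
            S.covDeriv3 (S.curvForm W) (S.e i) (S.e j) (S.e i) (S.e j)
        - ∑ i, ∑ j, (S.sgn i * S.sgn j) •
            S.covDeriv3 (S.curvForm W) (S.e i) (S.e j) (S.e i) (S.e j)
        + ∑ i, ∑ j, (S.sgn i * S.sgn j) •
            S.covDeriv3 (S.curvForm W) (S.e j) (S.e i) (S.e i) (S.e j)
        + ∑ i, ∑ j, (S.sgn i * S.sgn j) •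
            S.covDeriv3 (S.curvForm W) (S.e j) (S.e j) (S.e i) (S.e i) := by
    simp only [commTrace, ← Finset.sum_add_distrib, ← Finset.sum_sub_distrib, ← smul_add,
      ← smul_sub]
    refine Finset.sum_congr rfl fun i _ => Finset.sum_congr rfl fun j _ => congrArg _ ?_
    linear_combination S.two_covDeriv3_hessForm_eq hW (S.e i) (S.e j) (S.e j) (S.e i)
      - S.two_covDeriv3_hessForm_eq hW (S.e j) (S.e i) (S.e j) (S.e i)
  rw [S.commTrace_hessForm hRic, S.commTrace_koszulForm_eq_zero
      (S.covDeriv2_etaEinsteinForm_swap c m)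
      (S.sum_covDeriv3_covDeriv2_etaEinsteinForm_traceXY c m)
      (S.sum_covDeriv3_covDeriv2_etaEinsteinForm_traceYZ c m),
    S.commTrace_curvForm hRic, S.sum_sum_covDeriv3_curvForm_traceUY_traceXZ hRic,
    S.sum_sum_covDeriv3_curvForm_traceUZ_traceXY,
    S.sum_sum_covDeriv3_curvForm_traceUX_traceYZ hRic] at key
  exact eq_zero_of_add_self_eq_zero (eq_zero_of_add_self_eq_zero (by linear_combination key))

section Traces

lemma sum_frame_g_self : ∑ i, S.sgn i • S.g (S.e i) (S.e i) = algebraMap ℝ C (2 * n + 1) := by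
  have h : ∀ i, S.sgn i • S.g (S.e i) (S.e i) = 1 := fun i => by
    rw [S.e_orthonormal, if_pos rfl, Algebra.smul_def, ← map_mul, S.sgn_sq, map_one]
  rw [Finset.sum_congr rfl fun i _ => h i, Finset.sum_const, Finset.card_univ, Fintype.card_fin,
    nsmul_one, ← map_natCast (algebraMap ℝ C)]
  push_cast
  rfl

lemma sum_frame_eta_mul_self : ∑ i, S.sgn i • (S.η (S.e i) * S.η (S.e i)) = algebraMap ℝ C S.ε := by
  rw [S.sum_frame_eta_mul S.η S.η.isLinear, S.η_ξ, Algebra.smul_def, mul_one]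

lemma trace_etaEinsteinForm (c m : ℝ) :
    ∑ i, S.sgn i • S.etaEinsteinForm c m (S.e i) (S.e i)
      = algebraMap ℝ C (c * (2 * n + 1) + m * S.ε) := by
  have h : ∀ i, S.sgn i • S.etaEinsteinForm c m (S.e i) (S.e i)
      = c • (S.sgn i • S.g (S.e i) (S.e i)) + m • (S.sgn i • (S.η (S.e i) * S.η (S.e i))) :=
    fun i => by rw [etaEinsteinForm, smul_add, smul_comm (S.sgn i) c, smul_comm (S.sgn i) m]
  rw [Finset.sum_congr rfl fun i _ => h i, Finset.sum_add_distrib, ← Finset.smul_sum,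
    ← Finset.smul_sum, S.sum_frame_g_self, S.sum_frame_eta_mul_self, Algebra.smul_def,
    Algebra.smul_def, ← map_mul, ← map_mul, ← map_add]

variable {a b : ℝ}

lemma scal_eq (hRic : ∀ X Y, S.Ric X Y = a • S.g X Y + b • (S.η X * S.η Y)) :
    S.scal = algebraMap ℝ C (a * (2 * n + 1) + b * S.ε) := by
  rw [← S.trace_etaEinsteinForm]
  exact Finset.sum_congr rfl fun i _ => by rw [hRic]; rfl

lemma sum_sum_Ric_mul_self (hRic : ∀ X Y, S.Ric X Y = a • S.g X Y + b • (S.η X * S.η Y)) :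
    ∑ i, ∑ j, (S.sgn i * S.sgn j) • (S.Ric (S.e i) (S.e j) * S.Ric (S.e i) (S.e j))
      = algebraMap ℝ C (a ^ 2 * (2 * n + 1) + 2 * a * b * S.ε + b ^ 2) := by
  have hlin : ∀ X, IsLinearMap C (S.Ric X) := fun X =>
    ⟨fun Y Y' => by simp only [hRic, map_add, Algebra.smul_def]; ring,
      fun f Y => by simp only [hRic, map_smul, smul_eq_mul, Algebra.smul_def]; ring⟩
  have hξ : ∀ X, S.Ric X S.ξ = (a * S.ε + b) • S.η X := fun X => by
    rw [hRic, S.g_symm, S.g_xi, S.η_ξ]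
    simp only [Algebra.smul_def, map_add, map_mul]
    ring
  have h : ∀ i, S.sgn i • ∑ j, S.sgn j • (S.Ric (S.e i) (S.e j) * S.Ric (S.e i) (S.e j))
      = a • (S.sgn i • S.Ric (S.e i) (S.e i))
        + (b * S.ε * (a * S.ε + b)) • (S.sgn i • (S.η (S.e i) * S.η (S.e i))) := fun i => by
    rw [S.sum_frame_Ric_mul hRic _ (hlin _), hξ]
    simp only [Algebra.smul_def, map_mul, map_add]
    ring
  rw [S.sum_sum_sgn_mul_smul, Finset.sum_congr rfl fun i _ => h i, Finset.sum_add_distrib,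
    ← Finset.smul_sum, ← Finset.smul_sum, ← scal, S.scal_eq hRic, S.sum_frame_eta_mul_self,
    Algebra.smul_def, Algebra.smul_def, ← map_mul, ← map_mul, ← map_add]
  congr 1
  linear_combination (a * b * S.ε + b ^ 2) * S.eps_mul_self

end Traces

section Soliton

variable {a b c m : ℝ} {W : V}

lemma lieG_eq (X Y : V) : S.lieG W X Y = S.g (S.nabla X W) Y + S.g X (S.nabla Y W) := by
  rw [lieG, S.nabla_metric, S.bracket_eq, S.bracket_eq, LinearMap.map_sub₂, map_sub]
  ring

lemma etaEinsteinForm_eq_of_isEtaRicciSoliton {lam mu : ℝ} (hSol : S.IsEtaRicciSoliton W lam mu)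
    (hRic : ∀ X Y, S.Ric X Y = a • S.g X Y + b • (S.η X * S.η Y)) (X Y : V) :
    S.etaEinsteinForm (-(2 * (a + lam))) (-(2 * (b + mu))) X Y
      = S.g (S.nabla X W) Y + S.g X (S.nabla Y W) := by
  have hs := hSol X Y
  rw [S.lieG_eq, hRic] at hs
  rw [etaEinsteinForm]
  simp only [Algebra.smul_def, map_neg, map_mul, map_add, map_ofNat] at hs ⊢
  linear_combination -hs

lemma divergence_eq
    (hW : ∀ X Y, S.etaEinsteinForm c m X Y = S.g (S.nabla X W) Y + S.g X (S.nabla Y W)) :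
    S.divergence W = algebraMap ℝ C ((c * (2 * n + 1) + m * S.ε) / 2) := by
  refine eq_algebraMap_half_of_add_self_eq ?_
  rw [← S.trace_etaEinsteinForm, divergence, ← Finset.sum_add_distrib]
  refine Finset.sum_congr rfl fun i _ => ?_
  rw [hW, S.g_symm (S.nabla _ W), smul_add]

lemma g_xi_nabla_xi_eq
    (hW : ∀ X Y, S.etaEinsteinForm c m X Y = S.g (S.nabla X W) Y + S.g X (S.nabla Y W)) :
    S.g S.ξ (S.nabla S.ξ W) = algebraMap ℝ C ((c * S.ε + m) / 2) := by
  refine eq_algebraMap_half_of_add_self_eq ?_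
  have h := hW S.ξ S.ξ
  rw [S.g_symm (S.nabla S.ξ W), etaEinsteinForm, S.g_xi_xi, S.η_ξ, mul_one, Algebra.smul_def,
    Algebra.smul_def, mul_one, ← map_mul, ← map_add] at h
  exact h.symm

end Soliton

end ContactSetup

end

/-- on a `(2n+1)`-dimensional contact pseudo-metric manifold
admitting an η-Ricci soliton with `Ric = a g + b η⊗η` (`a, b` constants),
one has `Ricⁱʲ Ricᵢⱼ + λ r + μ(εa + b) = 0`. -/
theorem stmt6
    {C : Type} [CommRing C] [Algebra ℝ C]
    {V : Type} [AddCommGroup V] [Module ℝ V] [Module C V] [IsScalarTower ℝ C V]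
    {n : ℕ} (S : ContactSetup C V n)
    (W : V) (lam mu a b : ℝ)
    (hSol : S.IsEtaRicciSoliton W lam mu)
    (hRic : ∀ X Y, S.Ric X Y = a • S.g X Y + b • (S.η X * S.η Y)) :
    (∑ i, ∑ j, (S.sgn i * S.sgn j) • (S.Ric (S.e i) (S.e j) * S.Ric (S.e i) (S.e j)))
      + lam • S.scal + algebraMap ℝ C (mu * (S.ε * a + b)) = 0 := by
  have hW := S.etaEinsteinForm_eq_of_isEtaRicciSoliton hSol hRic
  have hP := S.ricciPairing_eq_zero hRic hW
  rw [S.ricciPairing_eq hRic, S.divergence_eq hW, S.g_xi_nabla_xi_eq hW] at hP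
  rw [S.sum_sum_Ric_mul_self hRic, S.scal_eq hRic]
  simp only [Algebra.smul_def, ← map_mul, ← map_add] at hP ⊢
  rw [← neg_eq_zero, ← map_neg, ← hP]
  congr 1
  ring
end
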